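/- arXiv:1507.02192 — 2 statements merged into one kernel-verified Lean document; each statement's English description precedes it below -/
import Mathlib

section
/- Let (R, φ) be a real Picard–Vessiot extension for the system φY = AY over (k, φ). Then the ring of constants of R equals C, i.e. R^φ = k^φ = C; in particular (R, φ) is a weak Picard–Vessiot extension for φY = AY over (k, φ). -/
universe u v w x

open scoped TensorProduct

section DifferenceAlgebra

variable {R : Type*} [CommRing R]

/-- A difference ideal of `(R, φ)`: an ideal stable under `φ`. -/
def IsDiffIdeal (φ : R ≃+* R) (I : Ideal R) : Prop :=
  ∀ y ∈ I, φ y ∈ I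

/-- A simple difference ring: the only difference ideals are `(0)` and `R`. -/
def IsSimpleDiffRing (φ : R ≃+* R) : Prop :=
  ∀ I : Ideal R, IsDiffIdeal φ I → I = ⊥ ∨ I = ⊤

/-- A real (commutative) ring: `0` is not a sum of squares of nonzero elements. -/
def IsRealRing (A : Type*) [CommRing A] : Prop :=
  ∀ (m : ℕ) (f : Fin m → A), (∀ i, f i ≠ 0) → ∑ i, f i ^ 2 = 0 → m = 0

/-- A real closed field: a real field with no proper real algebraic extension. -/
def IsRealClosedField (C : Type u) [Field C] : Prop :=
  IsRealRing C ∧ ∀ (L : Type u) [Field L] [Algebra C L],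
    Algebra.IsAlgebraic C L → IsRealRing L → Function.Surjective (algebraMap C L)

/-- The field of constants of a difference field `(k, φ)`. -/
def fixedSubfield {k : Type*} [Field k] (φ : k ≃+* k) : Subfield k where
  carrier := {y | φ y = y}
  mul_mem' := fun {a b} ha hb => by
    simp only [Set.mem_setOf_eq, map_mul] at *
    rw [ha, hb]
  one_mem' := map_one φ
  add_mem' := fun {a b} ha hb => by
    simp only [Set.mem_setOf_eq, map_add] at *
    rw [ha, hb]
  zero_mem' := map_zero φ
  neg_mem' := fun {a} ha => by
    simp only [Set.mem_setOf_eq, map_neg] at *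
    rw [ha]
  inv_mem' := fun a ha => by
    simp only [Set.mem_setOf_eq, map_inv₀] at *
    rw [ha]

/-- `(S, φS)` is a difference ring extension of `(k, φk)`. -/
def DiffCompat {k : Type*} [CommRing k] (S : Type*) [CommRing S] [Algebra k S]
    (φk : k ≃+* k) (φS : S ≃+* S) : Prop :=
  ∀ y : k, φS (algebraMap k S y) = algebraMap k S (φk y)

/-- `U` is a fundamental matrix of solutions of `φ Y = A Y` in `S`. -/
def IsFundamentalMatrix {k : Type*} [CommRing k] {S : Type*} [CommRing S] [Algebra k S]
    (φS : S ≃+* S) {n : ℕ} (A : Matrix (Fin n) (Fin n) k)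
    (U : Matrix (Fin n) (Fin n) S) : Prop :=
  IsUnit U.det ∧ U.map ⇑φS = A.map (algebraMap k S) * U

/-- `S` is generated, as a `k`-algebra, by the entries of `U` and `det(U)⁻¹`. -/
def GeneratedByFund (k : Type*) [CommSemiring k] {S : Type*} [CommRing S] [Algebra k S]
    {n : ℕ} (U : Matrix (Fin n) (Fin n) S) : Prop :=
  Algebra.adjoin k ((Set.range fun p : Fin n × Fin n => U p.1 p.2) ∪ {Ring.inverse U.det}) = ⊤

/-- A Picard–Vessiot extension for `φ Y = A Y` over `(k, φk)`. -/
def IsPicardVessiot (k : Type*) [Field k] (S : Type*) [CommRing S] [Algebra k S]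
    (φk : k ≃+* k) (φS : S ≃+* S) {n : ℕ} (A : Matrix (Fin n) (Fin n) k) : Prop :=
  Nontrivial S ∧ DiffCompat S φk φS ∧
    (∃ U : Matrix (Fin n) (Fin n) S, IsFundamentalMatrix φS A U ∧ GeneratedByFund k U) ∧
    IsSimpleDiffRing φS

/-- `Ri = R[i]`: the ring obtained from `R` by adjoining a square root `j` of `-1`,
free as an `R`-module with basis `1, j`. -/
def IsAdjoinI (R : Type*) [CommRing R] (Ri : Type*) [CommRing Ri] [Algebra R Ri]
    (j : Ri) : Prop :=
  j ^ 2 = -1 ∧ ∀ y : Ri, ∃! p : R × R, y = algebraMap R Ri p.1 + algebraMap R Ri p.2 * j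

end DifferenceAlgebra

/-! Nonzero constants of a simple difference ring are units. A transcendental element `b` of a
finitely generated `k`-algebra has only finitely many translates `b - a` that are units, so a
constant `r` of `R` is algebraic over `k` (its translates `r - m`, `m ∈ ℕ`, are nonzero
constants). The minimal polynomial of `r` over `k` is `φ`-stable, so `r` is integral over `C`,
and irreducibly so, since polynomial expressions in `r` over `C` are constants. Then
`C[X]/(minpoly C r)` embeds into the real ring `R`, so it is a real algebraic extension of the
real closed field `C`, hence equal to `C`, and `r ∈ C`. -/

open Polynomial PrimeSpectrum Topology

lemma PrimeSpectrum.exists_basicOpen_specializations_subset {A : Type*} [CommRing A]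
    {s : Set (PrimeSpectrum A)} (hs : IsConstructible s) {x : PrimeSpectrum A} (hx : x ∈ s) :
    ∃ f ∉ x.asIdeal, ∀ y, x ≤ y → y ∈ basicOpen f → y ∈ s := by
  obtain ⟨S, rfl⟩ := exists_constructibleSetData_iff.mpr hs
  obtain ⟨C, hC, hxg, hxf⟩ := Set.mem_iUnion₂.mp hx
  refine ⟨C.f, fun h => hxf (by simpa [mem_zeroLocus] using h), fun y hxy hy => ?_⟩
  refine Set.mem_iUnion₂.mpr ⟨C, hC, ?_, ?_⟩
  · exact (mem_zeroLocus _ _).mpr (((mem_zeroLocus _ _).mp hxg).trans hxy)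
  · simpa [mem_zeroLocus] using hy

/-- By Chevalley's theorem the image of `Spec R → Spec k[X]`, `X ↦ b`, is constructible; as it
contains the generic point, it contains every `(X - a)` with `f a ≠ 0` for some `f ≠ 0`, and a
prime of `R` over `(X - a)` contains `b - a`. -/
theorem Transcendental.finite_setOf_isUnit_sub {k R : Type*} [Field k] [CommRing R] [Algebra k R]
    [Algebra.FiniteType k R] {b : R} (hb : Transcendental k b) :
    {a : k | IsUnit (b - algebraMap k R a)}.Finite := by
  set ev : k[X] →+* R := (Polynomial.aeval b).toRingHom
  have hfp : ev.FinitePresentation := by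
    refine RingHom.FinitePresentation.of_finiteType.mp (.of_comp_finiteType (f := C) ?_)
    have : ev.comp C = algebraMap k R := by ext; simp [ev]
    exact this ▸ RingHom.finiteType_algebraMap.mpr inferInstance
  have hgeneric : (⊥ : PrimeSpectrum k[X]) ∈ Set.range (comap ev) := by
    obtain ⟨Q, hQ, hQbot⟩ := Ideal.exists_comap_eq_of_mem_minimalPrimes_of_injective
      (transcendental_iff_injective.mp hb) ⊥ (by simp [IsDomain.minimalPrimes_eq_singleton_bot])
    exact ⟨⟨Q, hQ⟩, PrimeSpectrum.ext hQbot⟩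
  obtain ⟨f, hf, hfs⟩ := exists_basicOpen_specializations_subset
    (isConstructible_range_comap hfp) hgeneric
  refine (finite_setOfPred_isRoot hf).subset fun a ha => ?_
  by_contra hroot
  have hprime : (Ideal.span {X - C a}).IsPrime :=
    (Ideal.span_singleton_prime (X_sub_C_ne_zero a)).mpr (prime_X_sub_C a)
  obtain ⟨Q, hQ⟩ := hfs ⟨_, hprime⟩ bot_le (by
    simpa [mem_basicOpen, Ideal.mem_span_singleton, dvd_iff_isRoot] using hroot)
  have hmem : X - C a ∈ (comap ev Q).asIdeal := hQ ▸ Ideal.mem_span_singleton_self _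
  exact Q.isPrime.ne_top (Ideal.eq_top_of_isUnit_mem _ (by simpa [ev] using hmem) ha)

theorem minpoly.irreducible_of_aeval_mul_eq_zero {A B : Type*} [CommRing A] [IsDomain A] [Ring B]
    [Nontrivial B] [Algebra A B] {x : B} (hx : IsIntegral A x)
    (h : ∀ f g : A[X], Polynomial.aeval x f * Polynomial.aeval x g = 0 →
      Polynomial.aeval x f = 0 ∨ Polynomial.aeval x g = 0) :
    Irreducible (minpoly A x) := by
  refine (irreducible_of_monic (monic hx) <| ne_one A x).2 fun f g hf hg he => ?_
  rw [← hf.isUnit_iff, ← hg.isUnit_iff]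
  by_contra! hfg
  have heval := congr_arg (Polynomial.aeval x) he
  rw [aeval A x, aeval_mul] at heval
  rcases h f g heval with heval | heval
  · exact aeval_ne_zero_of_dvdNotUnit_minpoly hx hf ⟨hf.ne_zero, g, hfg.2, he.symm⟩ heval
  · refine aeval_ne_zero_of_dvdNotUnit_minpoly hx hg ⟨hg.ne_zero, f, hfg.1, ?_⟩ heval
    rw [mul_comm, he]

theorem IsRealRing.of_injective {A B : Type*} [CommRing A] [CommRing B] {f : A →+* B}
    (hf : Function.Injective f) (hB : IsRealRing B) : IsRealRing A := by
  intro m g hg hsum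
  refine hB m (f ∘ g) (fun i h => hg i (hf (by simpa using h))) ?_
  simpa [map_sum] using congrArg f hsum

theorem IsRealClosedField.mem_range_of_irreducible_minpoly {F : Type u} [Field F] {R : Type*}
    [CommRing R] [Nontrivial R] [Algebra F R] (hF : IsRealClosedField F) (hR : IsRealRing R)
    {r : R} (hirr : Irreducible (minpoly F r)) :
    r ∈ Set.range (algebraMap F R) := by
  have := Fact.mk hirr
  have hr0 : (minpoly F r).eval₂ (algebraMap F R) r = 0 := minpoly.aeval F r
  let ε : AdjoinRoot (minpoly F r) →+* R := AdjoinRoot.lift (algebraMap F R) r hr0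
  have : Module.Finite F (AdjoinRoot (minpoly F r)) :=
    (AdjoinRoot.powerBasis hirr.ne_zero).finite
  obtain ⟨c, hc⟩ := hF.2 _ (Algebra.IsAlgebraic.of_finite _ _) (hR.of_injective ε.injective)
    (AdjoinRoot.root _)
  have hεc := congrArg ε hc
  rw [AdjoinRoot.algebraMap_eq, AdjoinRoot.lift_root, AdjoinRoot.lift_of] at hεc
  exact ⟨c, hεc⟩

theorem IsSimpleDiffRing.isUnit_of_apply_eq {R : Type*} [CommRing R] {φ : R ≃+* R}
    (hφ : IsSimpleDiffRing φ) {s : R} (hs : φ s = s) (hs0 : s ≠ 0) : IsUnit s := by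
  have hdiff : IsDiffIdeal φ (Ideal.span {s}) := fun y hy => by
    obtain ⟨a, rfl⟩ := Ideal.mem_span_singleton'.mp hy
    exact Ideal.mem_span_singleton'.mpr ⟨φ a, by rw [map_mul, hs]⟩
  exact Ideal.span_singleton_eq_top.mp
    ((hφ _ hdiff).resolve_left fun h => hs0 (Ideal.span_singleton_eq_bot.mp h))

theorem GeneratedByFund.finiteType {k S : Type*} [CommRing k] [CommRing S] [Algebra k S] {n : ℕ}
    {U : Matrix (Fin n) (Fin n) S} (hU : GeneratedByFund k U) : Algebra.FiniteType k S :=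
  ⟨Subalgebra.fg_def.mpr ⟨_, (Set.finite_range _).union (Set.finite_singleton _), hU⟩⟩

section DiffCompat

variable {k R : Type*} [Field k] [CommRing R] [Algebra k R] {σ : k ≃+* k} {τ : R ≃+* R}

theorem DiffCompat.apply_aeval (h : DiffCompat R σ τ) (r : R) (p : k[X]) :
    τ (aeval r p) = aeval (τ r) (p.map (σ : k →+* k)) := by
  rw [aeval_def, aeval_def, eval₂_map, ← RingEquiv.coe_toRingHom, hom_eval₂]
  congr 1
  ext c
  exact h c

theorem DiffCompat.apply_aeval_fixedSubfield (h : DiffCompat R σ τ) {r : R} (hr : τ r = r)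
    (p : (fixedSubfield σ)[X]) : τ (aeval r p) = aeval r p := by
  rw [← aeval_map_algebraMap k, h.apply_aeval, hr, map_map]
  congr 2
  ext c
  exact c.2

theorem DiffCompat.map_minpoly (h : DiffCompat R σ τ) {r : R} (hr : τ r = r)
    (hint : IsIntegral k r) :
    (minpoly k r).map (σ : k →+* k) = minpoly k r := by
  refine minpoly.unique _ _ ((minpoly.monic hint).map _) ?_ fun q hq hqr => ?_
  · have := h.apply_aeval r (minpoly k r)
    rwa [minpoly.aeval, map_zero, hr, eq_comm] at this
  · rw [degree_map]
    exact minpoly.min k r hq hqr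

theorem DiffCompat.isIntegral_fixedSubfield (h : DiffCompat R σ τ) {r : R} (hr : τ r = r)
    (hint : IsIntegral k r) : IsIntegral (fixedSubfield σ) r := by
  have hlifts : minpoly k r ∈ lifts (algebraMap (fixedSubfield σ) k) :=
    (lifts_iff_coeff_lifts _).mpr fun i =>
      ⟨⟨(minpoly k r).coeff i, show σ _ = _ by
        simpa using congrArg (coeff · i) (h.map_minpoly hr hint)⟩, rfl⟩
  obtain ⟨m, hm, -, hmonic⟩ := lifts_and_degree_eq_and_monic hlifts (minpoly.monic hint)
  exact ⟨m, hmonic, by rw [← aeval_def, ← aeval_map_algebraMap k, hm, minpoly.aeval]⟩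

end DiffCompat

theorem statement3_general
    {k : Type u} [Field k] [CharZero k] (φk : k ≃+* k)
    (hC_rc : IsRealClosedField (↥(fixedSubfield φk)))
    {n : ℕ} (A : Matrix (Fin n) (Fin n) k)
    (R : Type v) [CommRing R] [Algebra k R] (φR : R ≃+* R)
    (hPV : IsPicardVessiot k R φk φR A)
    (hRreal : IsRealRing R) :
    ∀ r : R, φR r = r ↔ ∃ c : k, φk c = c ∧ algebraMap k R c = r := by
  obtain ⟨hnt, hcompat, ⟨U, -, hgen⟩, hsimple⟩ := hPV
  have := hgen.finiteType
  intro r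
  refine ⟨fun hr => ?_, fun ⟨c, hc, hcr⟩ => by rw [← hcr, hcompat, hc]⟩
  have hint : IsIntegral k r := by
    by_contra htr
    refine Set.infinite_of_injective_forall_mem (α := ℕ) Nat.cast_injective (fun m => ?_)
      (Transcendental.finite_setOf_isUnit_sub (mt IsAlgebraic.isIntegral htr))
    refine hsimple.isUnit_of_apply_eq (by rw [map_sub, hr, hcompat, map_natCast]) fun h0 => ?_
    exact htr (sub_eq_zero.mp h0 ▸ isIntegral_algebraMap)
  have hirr : Irreducible (minpoly (fixedSubfield φk) r) := by
    refine minpoly.irreducible_of_aeval_mul_eq_zero (hcompat.isIntegral_fixedSubfield hr hint)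
      fun f g hfg => ?_
    refine or_iff_not_imp_left.mpr fun hf => ?_
    have hunit := hsimple.isUnit_of_apply_eq (hcompat.apply_aeval_fixedSubfield hr f) hf
    exact hunit.mul_right_eq_zero.mp hfg
  obtain ⟨c, hc⟩ := hC_rc.mem_range_of_irreducible_minpoly hRreal hirr
  exact ⟨c, c.2, hc⟩

/-- The ring of constants of a real Picard–Vessiot extension `(R, φ)` for `φ Y = A Y`
over `(k, φ)` equals `C = k^φ`: every constant of `R` comes from a constant of `k`.
In particular `(R, φ)` is a weak Picard–Vessiot extension. -/
theorem statement3
    {k : Type u} [Field k] [CharZero k] (φk : k ≃+* k)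
    (hk_real : IsRealRing k)
    (hC_rc : IsRealClosedField (↥(fixedSubfield φk)))
    {n : ℕ} (A : Matrix (Fin n) (Fin n) k) (hA : IsUnit A.det)
    (R : Type v) [CommRing R] [Algebra k R] (φR : R ≃+* R)
    (hPV : IsPicardVessiot k R φk φR A)
    (hRreal : IsRealRing R) :
    ∀ r : R, φR r = r ↔ ∃ c : k, φk c = c ∧ algebraMap k R c = r :=
  statement3_general φk hC_rc A R φR hPV hRreal
end

section
/- Let e = exp(1) and let φ be the ℝ-algebra automorphism of the Laurent polynomial ring ℝ[T, T⁻¹] determined by φ(T) = e·T. Then (ℝ[T, T⁻¹], φ) is a real Picard–Vessiot extension for the 1×1 system φY = eY over the difference field (ℝ, id): T is an invertible solution of φ(T) = eT, ℝ[T, T⁻¹] is generated over ℝ by T and T⁻¹, (ℝ[T, T⁻¹], φ) is a simple difference ring, and ℝ[T, T⁻¹] is a real ring. -/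
universe u v w x

open scoped TensorProduct

/-!
Since `φ (T n) = eⁿ T n`, the map `φ` acts diagonally on the monomials with pairwise distinct
eigenvalues `eⁿ`. So if `f` lies in a difference ideal and `d` is in its support, then
`φ f - e^d f` lies in the ideal too and its support is that of `f` with `d` removed; descending on
the size of the support, every nonzero difference ideal contains a monomial, which is a unit.
A nonzero Laurent polynomial does not vanish at some nonzero real point, and evaluating there
turns a vanishing sum of nonzero squares in `ℝ[T, T⁻¹]` into one in `ℝ`.
-/

theorem IsRealRing.of_forall_ne_zero_exists_ringHom {A : Type*} [CommRing A] {K : Type*}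
    [CommRing K] [LinearOrder K] [IsStrictOrderedRing K]
    (h : ∀ a : A, a ≠ 0 → ∃ ψ : A →+* K, ψ a ≠ 0) : IsRealRing A := by
  intro m f hf hsum
  by_contra hm
  obtain ⟨ψ, hψ⟩ := h _ (hf ⟨0, Nat.pos_of_ne_zero hm⟩)
  have hsq : ∑ i, ψ (f i) ^ 2 = 0 := by
    simpa only [map_sum, map_pow, map_zero] using congrArg ψ hsum
  exact hψ <| pow_eq_zero_iff two_ne_zero |>.mp <|
    (Finset.sum_eq_zero_iff_of_nonneg fun i _ => sq_nonneg _).mp hsq _ (Finset.mem_univ _)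

namespace LaurentPolynomial

theorem adjoin_T_one_T_neg_one (R : Type*) [CommSemiring R] :
    Algebra.adjoin R {(T 1 : R[T;T⁻¹]), T (-1)} = ⊤ := by
  refine eq_top_iff.mpr fun f _ => ?_
  induction f using LaurentPolynomial.induction_on_mul_T with | mul_T p n
  refine mul_mem ?_ ?_
  · have hp : Polynomial.toLaurentAlg = Polynomial.aeval (R := R) (T 1 : R[T;T⁻¹]) :=
      Polynomial.algHom_ext (by simp [Polynomial.toLaurentAlg_apply])
    rw [← Polynomial.toLaurentAlg_apply, hp]
    exact Algebra.adjoin_mono (by simp) (Polynomial.aeval_mem_adjoin_singleton R _)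
  · rw [show (T (-n) : R[T;T⁻¹]) = T (-1) ^ n by rw [T_pow, mul_neg_one]]
    exact pow_mem (Algebra.subset_adjoin (by simp)) n

theorem coeff_C_mul {R : Type*} [Semiring R] (a : R) (f : R[T;T⁻¹]) (n : ℤ) :
    (C a * f).coeff n = a * f.coeff n := by
  rw [← smul_eq_C_mul]
  rfl

section Field

variable {K : Type*} [Field K]

theorem isUnit_of_support_coeff_eq_singleton {f : K[T;T⁻¹]} {d : ℤ}
    (h : f.coeff.support = {d}) : IsUnit f := by
  obtain ⟨hfd, hf⟩ := Finsupp.support_eq_singleton.mp h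
  rw [show f = .single d (f.coeff d) from AddMonoidAlgebra.coeff_injective hf, single_eq_C_mul_T]
  exact ((isUnit_iff_ne_zero.mpr hfd).map C).mul (isUnit_T d)

theorem exists_eval₂_ne_zero [Infinite K] {f : K[T;T⁻¹]} (hf : f ≠ 0) :
    ∃ x : Kˣ, eval₂ (RingHom.id K) x f ≠ 0 := by
  classical
  obtain ⟨n, p, hp⟩ := f.exists_T_pow
  have hp0 : p ≠ 0 := by
    rintro rfl
    exact hf ((isUnit_T (n : ℤ)).mul_left_eq_zero.mp (by simpa using hp.symm))
  obtain ⟨x, hx⟩ := Infinite.exists_notMem_finset (Polynomial.X * p).roots.toFinset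
  obtain ⟨hx0, hpx⟩ : x ≠ 0 ∧ p.eval x ≠ 0 := by
    simpa [hp0, Polynomial.X_ne_zero] using hx
  refine ⟨Units.mk0 x hx0, fun h => hpx ?_⟩
  simpa [h] using congrArg (eval₂ (RingHom.id K) (Units.mk0 x hx0)) hp

theorem isRealRing [LinearOrder K] [IsStrictOrderedRing K] : IsRealRing K[T;T⁻¹] :=
  IsRealRing.of_forall_ne_zero_exists_ringHom fun _ hf =>
    have ⟨x, hx⟩ := exists_eval₂_ne_zero hf
    ⟨eval₂ (RingHom.id K) x, hx⟩

section MapTOne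

variable {F : Type*} [FunLike F K[T;T⁻¹] K[T;T⁻¹]] [RingHomClass F K[T;T⁻¹] K[T;T⁻¹]]
  {φ : F} {c : K}

theorem map_T_of_map_T_one (hc : c ≠ 0) (hφ : φ (T 1) = C c * T 1) (n : ℤ) :
    φ (T n) = C (c ^ n) * T n := by
  have hφ_neg : φ (T (-1)) = C c⁻¹ * T (-1) := by
    refine left_inv_eq_right_inv (a := φ (T 1)) ?_ ?_
    · rw [← map_mul, ← T_add, neg_add_cancel, T_zero, map_one]
    · rw [hφ, mul_mul_mul_comm, ← map_mul, mul_inv_cancel₀ hc, map_one, one_mul, ← T_add,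
        add_neg_cancel, T_zero]
  induction n using Int.induction_on with
  | zero => simp [T_zero]
  | succ k ih =>
    rw [T_add, map_mul, ih, hφ, mul_mul_mul_comm, ← map_mul, ← T_add, zpow_add_one₀ hc]
  | pred k ih =>
    rw [T_sub, map_mul, ih, hφ_neg, mul_mul_mul_comm, ← map_mul, ← T_sub, zpow_sub_one₀ hc]

theorem coeff_map_of_map_T_one (hφC : ∀ r, φ (C r) = C r) (hc : c ≠ 0)
    (hφ : φ (T 1) = C c * T 1) (f : K[T;T⁻¹]) (n : ℤ) :
    (φ f).coeff n = c ^ n * f.coeff n := by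
  induction f using LaurentPolynomial.induction_on' with
  | add p q hp hq =>
    simp only [map_add, AddMonoidAlgebra.coeff_add, Finsupp.add_apply, hp, hq, mul_add]
  | C_mul_T m a =>
    rw [map_mul, hφC, map_T_of_map_T_one hc hφ, ← mul_assoc, ← map_mul]
    simp only [coeff_C_mul, T_apply]
    split_ifs with h
    · subst h; ring
    · simp

theorem support_coeff_map_sub_C_mul (hφC : ∀ r, φ (C r) = C r)
    (hc : Function.Injective (c ^ · : ℤ → K)) (hφ : φ (T 1) = C c * T 1) (f : K[T;T⁻¹])
    (d : ℤ) : (φ f - C (c ^ d) * f).coeff.support = f.coeff.support.erase d := by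
  have hc0 : c ≠ 0 := by
    rintro rfl
    exact absurd (@hc 1 2 (by simp)) (by norm_num)
  ext n
  simp only [Finsupp.mem_support_iff, Finset.mem_erase, AddMonoidAlgebra.coeff_sub,
    Finsupp.sub_apply, coeff_map_of_map_T_one hφC hc0 hφ, coeff_C_mul, ← sub_mul,
    mul_ne_zero_iff, sub_ne_zero, hc.ne_iff]

end MapTOne

variable {φ : K[T;T⁻¹] ≃+* K[T;T⁻¹]} {c : K}

theorem eq_top_of_isDiffIdeal_of_mem (hφC : ∀ r, φ (C r) = C r)
    (hc : Function.Injective (c ^ · : ℤ → K)) (hφ : φ (T 1) = C c * T 1)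
    {I : Ideal K[T;T⁻¹]} (hI : IsDiffIdeal φ I) {f : K[T;T⁻¹]} (hfI : f ∈ I)
    (hf : f ≠ 0) : I = ⊤ := by
  induction hn : f.coeff.support.card using Nat.strong_induction_on generalizing f with
  | _ n ih =>
  obtain ⟨d, hd⟩ : f.coeff.support.Nonempty := by simpa using hf
  obtain hsingle | hnontrivial := Finset.eq_singleton_or_nontrivial hd
  · exact I.eq_top_of_isUnit_mem hfI (isUnit_of_support_coeff_eq_singleton hsingle)
  have hg := support_coeff_map_sub_C_mul hφC hc hφ f d
  refine ih _ ?_ (I.sub_mem (hI f hfI) (I.mul_mem_left (C (c ^ d)) hfI)) ?_ rfl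
  · rw [hg, Finset.card_erase_of_mem hd, ← hn]
    exact Nat.sub_lt (Finset.card_pos.mpr ⟨d, hd⟩) one_pos
  · rw [Ne, ← AddMonoidAlgebra.coeff_eq_zero, ← Ne, ← Finsupp.support_nonempty_iff, hg]
    exact hnontrivial.erase_nonempty

theorem isSimpleDiffRing_of_map_T_one (hφC : ∀ r, φ (C r) = C r)
    (hc : Function.Injective (c ^ · : ℤ → K)) (hφ : φ (T 1) = C c * T 1) :
    IsSimpleDiffRing φ :=
  fun _ hI => or_iff_not_imp_left.mpr fun hbot =>
    have ⟨_, hfI, hf⟩ := Submodule.exists_mem_ne_zero_of_ne_bot hbot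
    eq_top_of_isDiffIdeal_of_mem hφC hc hφ hI hfI hf

end Field

end LaurentPolynomial

/-- `(ℝ[T, T⁻¹], φ)` with `φ(T) = e·T`, `e = exp 1`, is a real Picard–Vessiot extension
for the `1×1` system `φY = eY` over `(ℝ, id)`: `T` is an invertible solution,
`ℝ[T, T⁻¹]` is generated over `ℝ` by `T` and `T⁻¹`, `(ℝ[T, T⁻¹], φ)` is a simple
difference ring, and `ℝ[T, T⁻¹]` is a real ring. -/
theorem statement15
    (φ : LaurentPolynomial ℝ ≃+* LaurentPolynomial ℝ)
    (hφC : ∀ r : ℝ, φ (LaurentPolynomial.C r) = LaurentPolynomial.C r)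
    (hφT : φ (LaurentPolynomial.T 1) =
      LaurentPolynomial.C (Real.exp 1) * LaurentPolynomial.T 1) :
    IsUnit (LaurentPolynomial.T 1 : LaurentPolynomial ℝ) ∧
    φ (LaurentPolynomial.T 1) = LaurentPolynomial.C (Real.exp 1) * LaurentPolynomial.T 1 ∧
    Algebra.adjoin ℝ
      ({LaurentPolynomial.T 1, LaurentPolynomial.T (-1)} : Set (LaurentPolynomial ℝ)) = ⊤ ∧
    IsSimpleDiffRing φ ∧
    IsRealRing (LaurentPolynomial ℝ) := by
  have hexp : Function.Injective (Real.exp 1 ^ · : ℤ → ℝ) :=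
    zpow_right_injective₀ (Real.exp_pos 1) (Real.one_lt_exp_iff.mpr one_pos).ne'
  exact ⟨LaurentPolynomial.isUnit_T 1, hφT, LaurentPolynomial.adjoin_T_one_T_neg_one ℝ,
    LaurentPolynomial.isSimpleDiffRing_of_map_T_one hφC hexp hφT, LaurentPolynomial.isRealRing⟩
end
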